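/- Closed form for the derivative of the observable semantics of a rotation gate (Lemma C.1(iii)): for every n×n complex matrices σ, O, ρ and every θ ∈ ℝ, deriv (fun t : ℝ => trace(O · R_σ(t) · ρ · (R_σ(t))ᴴ)) θ = (1/2) · trace(O · (R_σ(θ) · ρ · (R_σ(θ+π))ᴴ + R_σ(θ+π) · ρ · (R_σ(θ))ᴴ)). -/

import Mathlib

open Matrix Kronecker Complex

/-- The parameterized rotation gate `R_σ(θ) = cos(θ/2) • 1 − (i·sin(θ/2)) • σ`. -/
noncomputable def Rgate {n : ℕ} (σ : Matrix (Fin n) (Fin n) ℂ) (θ : ℝ) :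
    Matrix (Fin n) (Fin n) ℂ :=
  (Real.cos (θ / 2) : ℂ) • (1 : Matrix (Fin n) (Fin n) ℂ)
    - (Complex.I * (Real.sin (θ / 2) : ℂ)) • σ

/-- `|0⟩⟨0|`. -/
def e00 : Matrix (Fin 2) (Fin 2) ℂ := !![1, 0; 0, 0]

/-- `|1⟩⟨1|`. -/
def e11 : Matrix (Fin 2) (Fin 2) ℂ := !![0, 0; 0, 1]

/-- The Hadamard matrix. -/
noncomputable def Hmat : Matrix (Fin 2) (Fin 2) ℂ :=
  ((1 / Real.sqrt 2 : ℝ) : ℂ) • !![1, 1; 1, -1]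

/-- The Pauli-Z ancilla observable. -/
def ZA : Matrix (Fin 2) (Fin 2) ℂ := !![1, 0; 0, -1]

/-- The controlled rotation `C_Rσ(θ) = |0⟩⟨0| ⊗ R_σ(θ) + |1⟩⟨1| ⊗ R_σ(θ+π)`. -/
noncomputable def CR {n : ℕ} (σ : Matrix (Fin n) (Fin n) ℂ) (θ : ℝ) :
    Matrix (Fin 2 × Fin n) (Fin 2 × Fin n) ℂ :=
  e00 ⊗ₖ Rgate σ θ + e11 ⊗ₖ Rgate σ (θ + Real.pi)

/-- The differentiation gadget `R′_σ(θ) = (H ⊗ 1) C_Rσ(θ) (H ⊗ 1)`. -/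
noncomputable def Rgadget {n : ℕ} (σ : Matrix (Fin n) (Fin n) ℂ) (θ : ℝ) :
    Matrix (Fin 2 × Fin n) (Fin 2 × Fin n) ℂ :=
  (Hmat ⊗ₖ (1 : Matrix (Fin n) (Fin n) ℂ)) * CR σ θ
    * (Hmat ⊗ₖ (1 : Matrix (Fin n) (Fin n) ℂ))

/-!
Differentiating the half-angle coefficients of `Rgate` gives `d/dθ R_σ(θ) = ½ R_σ(θ + π)`, since
shifting `θ` by `π` turns `(cos (θ/2), sin (θ/2))` into `(-sin (θ/2), cos (θ/2))`. The closed form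
is then the product rule for `O R ρ Rᴴ` followed by linearity of the trace.
-/

-- The Frobenius norm, unlike the `L∞` operator norm, makes instance search find `ContinuousStar`
-- (via `NormedStarGroup`), which `HasDerivAt.star` needs.
attribute [local instance] Matrix.frobeniusNormedAddCommGroup Matrix.frobeniusNormedSpace
  Matrix.frobeniusNormedRing Matrix.frobeniusNormedAlgebra

section
variable {m 𝕜 : Type*} [Fintype m] [RCLike 𝕜] {X : ℝ → Matrix m m 𝕜} {X' : Matrix m m 𝕜} {t : ℝ}

theorem HasDerivAt.matrix_trace (hX : HasDerivAt X X' t) :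
    HasDerivAt (fun s => (X s).trace) X'.trace t :=
  (LinearMap.toContinuousLinearMap
    ((Matrix.traceLinearMap m 𝕜 𝕜).restrictScalars ℝ)).hasFDerivAt.comp_hasDerivAt t hX

theorem HasDerivAt.trace_mul_mul_conjTranspose [DecidableEq m] (hX : HasDerivAt X X' t)
    (O ρ : Matrix m m 𝕜) :
    HasDerivAt (fun s => (O * X s * ρ * (X s)ᴴ).trace)
      (O * (X' * ρ * (X t)ᴴ + X t * ρ * X'ᴴ)).trace t := by
  have hprod := ((hX.const_mul O).mul_const ρ).fun_mul hX.star
  simp only [← Matrix.star_eq_conjTranspose, Matrix.mul_add, ← Matrix.mul_assoc]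
  exact hprod.matrix_trace
end

theorem Rgate_add_pi {n : ℕ} (σ : Matrix (Fin n) (Fin n) ℂ) (θ : ℝ) :
    Rgate σ (θ + Real.pi) =
      (-Real.sin (θ / 2) : ℂ) • (1 : Matrix (Fin n) (Fin n) ℂ) - (I * Real.cos (θ / 2)) • σ := by
  rw [Rgate, add_div, Real.cos_add_pi_div_two, Real.sin_add_pi_div_two]
  push_cast
  rfl

theorem hasDerivAt_Rgate {n : ℕ} (σ : Matrix (Fin n) (Fin n) ℂ) (θ : ℝ) :
    HasDerivAt (Rgate σ) ((1 / 2 : ℂ) • Rgate σ (θ + Real.pi)) θ := by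
  have hcos :
      HasDerivAt (fun t : ℝ => (Real.cos (t / 2) : ℂ)) (-Real.sin (θ / 2) * (1 / 2) : ℝ) θ :=
    ((Real.hasDerivAt_cos _).comp θ ((hasDerivAt_id θ).div_const 2)).ofReal_comp
  have hsin :
      HasDerivAt (fun t : ℝ => (Real.sin (t / 2) : ℂ)) (Real.cos (θ / 2) * (1 / 2) : ℝ) θ :=
    ((Real.hasDerivAt_sin _).comp θ ((hasDerivAt_id θ).div_const 2)).ofReal_comp
  refine ((hcos.smul_const 1).sub ((hsin.const_mul I).smul_const σ)).congr_deriv ?_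
  rw [Rgate_add_pi]
  push_cast
  module

/-- Closed form for the derivative of the observable semantics of a rotation gate
(Lemma C.1(iii)). -/
theorem rotation_obs_deriv_closed_form (n : ℕ) (σ O ρ : Matrix (Fin n) (Fin n) ℂ) (θ : ℝ) :
    deriv (fun t : ℝ => (O * Rgate σ t * ρ * (Rgate σ t)ᴴ).trace) θ
      = (1 / 2 : ℂ) * (O * (Rgate σ θ * ρ * (Rgate σ (θ + Real.pi))ᴴ
          + Rgate σ (θ + Real.pi) * ρ * (Rgate σ θ)ᴴ)).trace := by
  rw [((hasDerivAt_Rgate σ θ).trace_mul_mul_conjTranspose O ρ).deriv, conjTranspose_smul]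
  simp only [Matrix.smul_mul, Matrix.mul_smul, Matrix.mul_add, trace_add, trace_smul, smul_eq_mul,
    star_div₀, star_one, star_ofNat]
  ring
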